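/- The quadratic map ψ_2 = (ψ_2^j)_{j≥1} on sequences v ∈ h^{m'}(N), defined by ψ_2^j(v) = (2√(πj))^{-1} Σ_{k∈Z_0, k≠j} (|k|^{1/2}|j−k|^{1/2}/(k(k−j))) v'_k v'_{j−k} where v'_k = v_k for k ≥ 1 and v'_k = conj(v_{−k}) for k ≤ −1, satisfies the symmetry relations ∂ψ_2^j/∂v̄_k = ∂ψ_2^k/∂v̄_j and ∂ψ_2^j/∂v_k = −∂ψ̄_2^k/∂v̄_j for all j,k ∈ N. Consequently the 1-form i ψ_2(v) dv is closed, and (id + ψ_2)^* ω_0 = ω_0 + O(v²) terms in the sense that the quadratic correction to ω_0 vanishes. -/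

import Mathlib

open scoped Real ENNReal NNReal ComplexConjugate
open Function

noncomputable section

/-- The weighted `l²` norm `‖v‖_{m'}² = Σ_{j≥1} j^{2m'}|v_j|²` over positive indices. -/
def hn (m : ℝ) (v : ℤ → ℂ) : ℝ≥0∞ :=
  (∑' j : ℤ, if 1 ≤ j then (j.natAbs : ℝ≥0∞) ^ (2 * m) * (‖v j‖₊ : ℝ≥0∞) ^ 2 else 0) ^
    ((1 : ℝ) / 2)

/-- Extension of `v = (v_j)_{j ≥ 1}` to negative indices by `v'_{-k} = conj v_k`. -/
def vext (v : ℤ → ℂ) (k : ℤ) : ℂ :=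
  if 0 < k then v k else if k < 0 then conj (v (-k)) else 0

/-- The quadratic part `ψ₂^j(v) = (2√(πj))⁻¹ Σ_{k ≠ 0, j} (|k|^{1/2}|j−k|^{1/2}/(k(k−j)))
v'_k v'_{j−k}` of the integrating transformation for KdV. -/
def ψ2 (j : ℤ) (v : ℤ → ℂ) : ℂ :=
  (((2 * Real.sqrt (π * (j : ℝ)))⁻¹ : ℝ) : ℂ) *
    ∑' k : ℤ, if k ≠ 0 ∧ k ≠ j then
      (((Real.sqrt |(k : ℝ)| * Real.sqrt |(j : ℝ) - (k : ℝ)|) /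
        ((k : ℝ) * ((k : ℝ) - (j : ℝ))) : ℝ) : ℂ) * vext v k * vext v (j - k)
    else 0

/-- The derivative in the real direction of the `k`-th coordinate. -/
def Dx (f : (ℤ → ℂ) → ℂ) (v : ℤ → ℂ) (k : ℤ) : ℂ :=
  deriv (fun t : ℝ => f (update v k (v k + (t : ℂ)))) 0

/-- The derivative in the imaginary direction of the `k`-th coordinate. -/
def Dy (f : (ℤ → ℂ) → ℂ) (v : ℤ → ℂ) (k : ℤ) : ℂ :=
  deriv (fun t : ℝ => f (update v k (v k + (t : ℂ) * Complex.I))) 0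

/-- The Wirtinger derivative `∂f/∂v_k = ½(∂_x − i ∂_y) f`. -/
def wirt (f : (ℤ → ℂ) → ℂ) (v : ℤ → ℂ) (k : ℤ) : ℂ :=
  (Dx f v k - Complex.I * Dy f v k) / 2

/-- The conjugate Wirtinger derivative `∂f/∂v̄_k = ½(∂_x + i ∂_y) f`. -/
def wirtBar (f : (ℤ → ℂ) → ℂ) (v : ℤ → ℂ) (k : ℤ) : ℂ :=
  (Dx f v k + Complex.I * Dy f v k) / 2

/-- The real 1-form `i ψ₂(v) dv`, evaluated at the tangent vector `ξ`. -/
def oneForm (v ξ : ℤ → ℂ) : ℝ :=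
  (∑' j : ℤ, if 1 ≤ j then Complex.I * ψ2 j v * conj (ξ j) else 0).re

/-!
`ψ₂^j v = B_j(v, v)` for the real-bilinear form `B_j(u, w) = Σ_κ K_j(κ) u'_κ w'_{j-κ}` with
kernel `K_j(κ) = (2√(πj))⁻¹ √|κ| √|j-κ| / (κ(κ-j))`. Reindexing by `κ ↦ j - κ` makes `B_j`
symmetric, and AM-GM, `|K_j(κ) a b| ≤ C_j (|a|²/|κ| + |b|²/|j-κ|)`, makes it converge on
`h^{-1/2}`. Hence `ψ₂^j(v + w) = ψ₂^j v + 2 B_j(v, w) + ψ₂^j w`, and `w = c e_k` gives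
`∂ψ₂^j/∂v_k = 2 K_j(k) v'_{j-k}` and `∂ψ₂^j/∂v̄_k = 2 K_j(-k) v'_{j+k}`. The symmetry relations
are then the kernel identities `K_j(-k) = K_k(-j)` and `K_j(k) = -K_k(j)` for `j, k ≥ 1`,
together with `v'_{-n} = conj v'_n`. With `w = t ξ` instead, the derivative of the 1-form along
`ξ`, evaluated at `η`, is `Re Σ_{j,k} i (ξ_k ∂_k ψ₂^j + ξ̄_k ∂̄_k ψ₂^j) η̄_j`, which the symmetry
relations make symmetric in `ξ` and `η`.
-/

section Wirtinger

open Complex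

lemma deriv_quadratic {E : Type*} [NormedAddCommGroup E] [NormedSpace ℝ E] (a b c : E) :
    deriv (fun t : ℝ => a + t • b + t ^ 2 • c) 0 = b := by
  have h : HasDerivAt (fun t : ℝ => a + t • b + t ^ 2 • c)
      ((0 : E) + (1 : ℝ) • b + ((2 : ℕ) * (0 : ℝ) ^ (2 - 1)) • c) 0 :=
    ((hasDerivAt_const (0 : ℝ) a).add ((hasDerivAt_id 0).smul_const b)).add
      ((hasDerivAt_pow 2 (0 : ℝ)).smul_const c)
  simpa using h.deriv

lemma wirt_eq_and_wirtBar_eq {F : (ℤ → ℂ) → ℂ} {v : ℤ → ℂ} {k : ℤ} {A P Q : ℂ} {E : ℂ → ℂ}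
    (hE : ∀ (t : ℝ) (c : ℂ), E (t * c) = t ^ 2 * E c)
    (hF : ∀ c, F (update v k (v k + c)) = A + P * c + Q * conj c + E c) :
    wirt F v k = P ∧ wirtBar F v k = Q := by
  have hDx : Dx F v k = P + Q := by
    have h : (fun t : ℝ => F (update v k (v k + t))) = fun t => A + t • (P + Q) + t ^ 2 • E 1 := by
      funext t
      have := hE t 1
      rw [mul_one] at this
      simp only [hF, this, conj_ofReal, real_smul, ofReal_pow]
      ring
    rw [Dx, h, deriv_quadratic]
  have hDy : Dy F v k = I * (P - Q) := by
    have h : (fun t : ℝ => F (update v k (v k + t * I))) =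
        fun t => A + t • (I * (P - Q)) + t ^ 2 • E I := by
      funext t
      simp only [hF, hE, map_mul, conj_ofReal, conj_I, real_smul, ofReal_pow]
      ring
    rw [Dy, h, deriv_quadratic]
  constructor
  · rw [wirt, hDx, hDy]
    linear_combination (-(P - Q) / 2) * I_mul_I
  · rw [wirtBar, hDx, hDy]
    linear_combination ((P - Q) / 2) * I_mul_I

lemma wirtBar_conj (F : (ℤ → ℂ) → ℂ) (v : ℤ → ℂ) (k : ℤ) :
    wirtBar (fun w => conj (F w)) v k = conj (wirt F v k) := by
  have h (g : ℝ → ℂ) : deriv (fun t => conj (g t)) 0 = conj (deriv g 0) := deriv.star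
  simp only [wirtBar, wirt, Dx, Dy, h, map_div₀, map_sub, map_mul, conj_I, map_ofNat]
  ring

lemma re_I_mul_conj_symm {a b W W' M M' : ℂ} (hW : W = -conj W') (hM : M = M') :
    (I * (a * W + conj a * M) * conj b).re = (I * (b * W' + conj b * M') * conj a).re := by
  subst hW hM
  simp only [mul_re, mul_im, add_re, add_im, neg_re, neg_im, conj_re, conj_im, I_re, I_im]
  ring

end Wirtinger

namespace Psi2

open Complex

lemma vext_add (u w : ℤ → ℂ) (n : ℤ) : vext (u + w) n = vext u n + vext w n := by
  unfold vext; split_ifs <;> simp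

lemma vext_real_smul (t : ℝ) (w : ℤ → ℂ) (n : ℤ) : vext ((t : ℂ) • w) n = t * vext w n := by
  unfold vext; split_ifs <;> simp

lemma vext_sum {ι : Type*} (s : Finset ι) (f : ι → ℤ → ℂ) (n : ℤ) :
    vext (∑ i ∈ s, f i) n = ∑ i ∈ s, vext (f i) n := by
  unfold vext; split_ifs <;> simp [Finset.sum_apply]

lemma conj_vext (v : ℤ → ℂ) (n : ℤ) : conj (vext v n) = vext v (-n) := by
  unfold vext
  rcases lt_trichotomy n 0 with h | rfl | h
  · simp [h, h.not_gt]
  · simp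
  · simp [h, h.not_gt]

lemma vext_single {k : ℤ} (hk : 0 < k) (c : ℂ) :
    vext (Pi.single k c) = Pi.single k c + Pi.single (-k) (conj c) := by
  funext n
  simp only [vext, Pi.add_apply, Pi.single_apply]
  split_ifs <;> first | omega | simp_all

def kernel (j κ : ℤ) : ℝ :=
  (2 * √(π * j))⁻¹ * (√|(κ : ℝ)| * √|(j : ℝ) - κ| / (κ * (κ - j)))

lemma kernel_sub_left (j κ : ℤ) : kernel j (j - κ) = kernel j κ := by
  unfold kernel
  push_cast
  rw [sub_sub_cancel, mul_comm √|(j : ℝ) - κ|,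
    show ((j : ℝ) - κ) * (j - κ - j) = κ * (κ - j) by ring]

lemma kernel_of_pos {j k : ℤ} (hj : 0 < j) (hk : 0 < k) :
    kernel j k = √|(j : ℝ) - k| / (2 * √π * √j * √k * (k - j)) := by
  have hj' : (0 : ℝ) < j := by exact_mod_cast hj
  have hk' : (0 : ℝ) < k := by exact_mod_cast hk
  unfold kernel
  rw [abs_of_pos hk', Real.sqrt_mul Real.pi_pos.le, mul_div_mul_comm, Real.sqrt_div_self']
  have := Real.sqrt_pos.2 hk'
  have := Real.sqrt_pos.2 hj'
  have := Real.sqrt_pos.2 Real.pi_pos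
  field_simp

lemma kernel_neg {j k : ℤ} (hj : 0 < j) (hk : 0 < k) :
    kernel j (-k) = (2 * √π * (√j * √k * √(j + k)))⁻¹ := by
  have hj' : (0 : ℝ) < j := by exact_mod_cast hj
  have hk' : (0 : ℝ) < k := by exact_mod_cast hk
  unfold kernel
  push_cast
  rw [abs_neg, abs_of_pos hk', sub_neg_eq_add, abs_of_pos (by positivity),
    Real.sqrt_mul Real.pi_pos.le]
  have := Real.sqrt_pos.2 hk'
  have := Real.sqrt_pos.2 hj'
  have := Real.sqrt_pos.2 Real.pi_pos
  have := Real.sqrt_pos.2 (add_pos hj' hk')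
  rw [show -(k : ℝ) * (-k - j) = √k ^ 2 * √(j + k) ^ 2 by
    rw [Real.sq_sqrt hk'.le, Real.sq_sqrt (by positivity)]; ring]
  field_simp

lemma kernel_neg_symm {j k : ℤ} (hj : 0 < j) (hk : 0 < k) : kernel j (-k) = kernel k (-j) := by
  rw [kernel_neg hj hk, kernel_neg hk hj, add_comm (k : ℝ)]
  ring

lemma kernel_antisymm {j k : ℤ} (hj : 0 < j) (hk : 0 < k) : kernel j k = -kernel k j := by
  rw [kernel_of_pos hj hk, kernel_of_pos hk hj, abs_sub_comm, ← neg_sub (j : ℝ), mul_neg, div_neg]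
  ring_nf

def form (j : ℤ) (u w : ℤ → ℂ) : ℂ :=
  ∑' κ, (kernel j κ : ℂ) * vext u κ * vext w (j - κ)

/-- `kernel j` vanishes at `0` and at `j` (the formula is `0 / 0 = 0` there), so the restriction
`κ ≠ 0, j` in `ψ2` can be dropped. -/
lemma psi2_eq_form (j : ℤ) (v : ℤ → ℂ) : ψ2 j v = form j v v := by
  rw [ψ2, form, ← tsum_mul_left]
  refine tsum_congr fun κ => ?_
  split_ifs with h
  · simp only [kernel]; push_cast; ring
  · obtain rfl | rfl : κ = 0 ∨ κ = j := by tauto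
    all_goals simp [kernel]

lemma form_comm (j : ℤ) (u w : ℤ → ℂ) : form j u w = form j w u := by
  rw [form, ← (Equiv.subLeft j).tsum_eq]
  refine tsum_congr fun κ => ?_
  simp only [Equiv.subLeft_apply, kernel_sub_left, sub_sub_cancel]
  ring

lemma form_real_smul_right (j : ℤ) (u w : ℤ → ℂ) (t : ℝ) :
    form j u ((t : ℂ) • w) = t * form j u w := by
  simp only [form, vext_real_smul, ← tsum_mul_left]
  exact tsum_congr fun κ => by ring

lemma psi2_real_smul (j : ℤ) (w : ℤ → ℂ) (t : ℝ) : ψ2 j ((t : ℂ) • w) = t ^ 2 * ψ2 j w := by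
  rw [psi2_eq_form, psi2_eq_form, form_real_smul_right, form_comm, form_real_smul_right]
  ring

lemma form_single_left (j : ℤ) {k : ℤ} (hk : 0 < k) (c : ℂ) (w : ℤ → ℂ) :
    form j (Pi.single k c) w =
      c * kernel j k * vext w (j - k) + conj c * kernel j (-k) * vext w (j + k) := by
  simp only [form, vext_single hk, Pi.add_apply, Pi.single_apply, mul_add, add_mul, ite_mul,
    mul_ite, mul_zero, zero_mul]
  rw [Summable.tsum_add (summable_of_ne_finset_zero (s := {k}) (by simp_all))
    (summable_of_ne_finset_zero (s := {-k}) (by simp_all)), tsum_ite_eq, tsum_ite_eq,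
    sub_neg_eq_add]
  ring

/-- `u ∈ h^{-1/2}`. -/
def MemHMinusHalf (u : ℤ → ℂ) : Prop :=
  Summable fun κ : ℤ => ‖vext u κ‖ ^ 2 / |(κ : ℝ)|

lemma memHMinusHalf_of_finite {u : ℤ → ℂ} (hu : (support u).Finite) : MemHMinusHalf u := by
  refine summable_of_hasFiniteSupport ((hu.union (hu.preimage neg_injective.injOn)).subset ?_)
  intro κ hκ
  by_contra h
  simp only [Set.mem_union, Set.mem_preimage, mem_support, not_or, not_not] at h
  simp [vext, h] at hκ

lemma memHMinusHalf_single (k : ℤ) (c : ℂ) : MemHMinusHalf (Pi.single k c) :=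
  memHMinusHalf_of_finite ((Set.finite_singleton k).subset Pi.support_single_subset)

lemma memHMinusHalf_of_hn {m : ℝ} (hm : -1 / 2 ≤ m) {v : ℤ → ℂ} (hv : hn m v < ∞) :
    MemHMinusHalf v := by
  have hweighted : Summable fun j : ℤ =>
      if 1 ≤ j then (j.natAbs : ℝ) ^ (2 * m) * ‖v j‖ ^ 2 else 0 := by
    rw [hn, ENNReal.rpow_lt_top_iff_of_pos (by norm_num)] at hv
    refine (ENNReal.summable_toReal hv.ne).congr fun j => ?_
    split_ifs <;> simp [ENNReal.toReal_mul, ← ENNReal.toReal_rpow]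
  have hposIdx : Summable fun j : ℤ => if 1 ≤ j then ‖v j‖ ^ 2 / |(j : ℝ)| else 0 := by
    refine hweighted.of_nonneg_of_le (fun j => by positivity) fun j => ?_
    split_ifs with hj
    · have h1 : (1 : ℝ) ≤ j.natAbs := by exact_mod_cast (show 1 ≤ j.natAbs by omega)
      rw [div_eq_mul_inv, mul_comm, show |(j : ℝ)| = j.natAbs by simp [Nat.cast_natAbs],
        ← Real.rpow_neg_one]
      exact mul_le_mul_of_nonneg_right (Real.rpow_le_rpow_of_exponent_le h1 (by linarith))
        (by positivity)
    · rfl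
  refine (hposIdx.add (hposIdx.comp_injective neg_injective)).congr fun κ => ?_
  rcases lt_trichotomy κ 0 with h | rfl | h
  · simp [vext, h, h.not_gt, show ¬ 1 ≤ κ by omega, show 1 ≤ -κ by omega]
  · simp [vext]
  · simp [vext, h, show 1 ≤ κ by omega, show ¬ 1 ≤ -κ by omega]

lemma abs_kernel (j κ : ℤ) :
    |kernel j κ| = |(2 * √(π * j))⁻¹| * (√|(κ : ℝ)| * √|(j : ℝ) - κ|)⁻¹ := by
  rw [kernel, abs_mul, abs_div, abs_of_nonneg (by positivity : 0 ≤ √|(κ : ℝ)| * √|(j : ℝ) - κ|),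
    abs_mul, abs_sub_comm (κ : ℝ), ← Real.sqrt_mul (abs_nonneg _), Real.sqrt_div_self', one_div]

lemma norm_kernel_mul_le (j κ : ℤ) (a b : ℂ) :
    ‖(kernel j κ : ℂ) * a * b‖ ≤
      |(2 * √(π * j))⁻¹| / 2 * (‖a‖ ^ 2 / |(κ : ℝ)| + ‖b‖ ^ 2 / |(j : ℝ) - κ|) := by
  have amgm := two_mul_le_add_sq (‖a‖ / √|(κ : ℝ)|) (‖b‖ / √|(j : ℝ) - κ|)
  rw [div_pow, div_pow, Real.sq_sqrt (abs_nonneg _), Real.sq_sqrt (abs_nonneg _)] at amgm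
  have hC := abs_nonneg (2 * √(π * j))⁻¹
  rw [norm_mul, norm_mul, norm_real, Real.norm_eq_abs, abs_kernel]
  calc _ = |(2 * √(π * j))⁻¹| * (‖a‖ / √|(κ : ℝ)| * (‖b‖ / √|(j : ℝ) - κ|)) := by ring
    _ ≤ _ := by nlinarith

lemma summable_form {u w : ℤ → ℂ} (hu : MemHMinusHalf u) (hw : MemHMinusHalf w) (j : ℤ) :
    Summable fun κ => (kernel j κ : ℂ) * vext u κ * vext w (j - κ) := by
  have hw' : Summable fun κ : ℤ => ‖vext w (j - κ)‖ ^ 2 / |(j : ℝ) - κ| := by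
    refine (hw.comp_injective (sub_right_injective (b := j))).congr fun κ => ?_
    simp
  exact .of_norm_bounded ((hu.add hw').mul_left _) fun κ => norm_kernel_mul_le j κ _ _

lemma psi2_add {v w : ℤ → ℂ} (hv : MemHMinusHalf v) (hw : MemHMinusHalf w) (j : ℤ) :
    ψ2 j (v + w) = ψ2 j v + 2 * form j v w + ψ2 j w := by
  have hsplit : ∀ κ, (kernel j κ : ℂ) * vext (v + w) κ * vext (v + w) (j - κ) =
      (kernel j κ : ℂ) * vext v κ * vext v (j - κ) +
        ((kernel j κ : ℂ) * vext v κ * vext w (j - κ) +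
          (kernel j κ : ℂ) * vext w κ * vext v (j - κ)) +
        (kernel j κ : ℂ) * vext w κ * vext w (j - κ) := fun κ => by
    rw [vext_add, vext_add]; ring
  simp only [psi2_eq_form, form]
  have hvw := (summable_form hv hw j).add (summable_form hw hv j)
  rw [tsum_congr hsplit,
    Summable.tsum_add ((summable_form hv hv j).add hvw) (summable_form hw hw j),
    Summable.tsum_add (summable_form hv hv j) hvw,
    Summable.tsum_add (summable_form hv hw j) (summable_form hw hv j),
    ← form, ← form, ← form, ← form, form_comm j w v]
  ring

lemma form_sum_right {ι : Type*} {u : ℤ → ℂ} (hu : MemHMinusHalf u) {s : Finset ι}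
    {f : ι → ℤ → ℂ} (hf : ∀ i ∈ s, MemHMinusHalf (f i)) (j : ℤ) :
    form j u (∑ i ∈ s, f i) = ∑ i ∈ s, form j u (f i) := by
  simp only [form, vext_sum, Finset.mul_sum]
  exact Summable.tsum_finsetSum fun i hi => summable_form hu (hf i hi) j

lemma update_add_eq_add_single (v : ℤ → ℂ) (k : ℤ) (c : ℂ) :
    update v k (v k + c) = v + Pi.single k c := by
  funext i
  by_cases h : i = k <;> simp [h]

lemma psi2_update {v : ℤ → ℂ} (hv : MemHMinusHalf v) (j : ℤ) {k : ℤ} (hk : 0 < k) (c : ℂ) :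
    ψ2 j (update v k (v k + c)) = ψ2 j v + 2 * kernel j k * vext v (j - k) * c +
      2 * kernel j (-k) * vext v (j + k) * conj c + ψ2 j (Pi.single k c) := by
  rw [update_add_eq_add_single, psi2_add hv (memHMinusHalf_single k c), form_comm,
    form_single_left j hk]
  ring

lemma wirt_psi2_and_wirtBar_psi2 {v : ℤ → ℂ} (hv : MemHMinusHalf v) (j : ℤ) {k : ℤ}
    (hk : 0 < k) :
    wirt (ψ2 j) v k = 2 * kernel j k * vext v (j - k) ∧
      wirtBar (ψ2 j) v k = 2 * kernel j (-k) * vext v (j + k) := by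
  refine wirt_eq_and_wirtBar_eq (E := fun c => ψ2 j (Pi.single k c)) (fun t c => ?_)
    (psi2_update hv j hk)
  rw [← smul_eq_mul, Pi.single_smul, psi2_real_smul]

lemma wirtBar_psi2_comm {v : ℤ → ℂ} (hv : MemHMinusHalf v) {j k : ℤ} (hj : 0 < j)
    (hk : 0 < k) : wirtBar (ψ2 j) v k = wirtBar (ψ2 k) v j := by
  rw [(wirt_psi2_and_wirtBar_psi2 hv j hk).2, (wirt_psi2_and_wirtBar_psi2 hv k hj).2,
    kernel_neg_symm hj hk, add_comm]

lemma wirt_psi2_eq_neg_conj {v : ℤ → ℂ} (hv : MemHMinusHalf v) {j k : ℤ} (hj : 0 < j)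
    (hk : 0 < k) : wirt (ψ2 j) v k = -conj (wirt (ψ2 k) v j) := by
  rw [(wirt_psi2_and_wirtBar_psi2 hv j hk).1, (wirt_psi2_and_wirtBar_psi2 hv k hj).1,
    kernel_antisymm hj hk]
  simp only [map_mul, map_ofNat, conj_ofReal, conj_vext, neg_sub, ofReal_neg]
  ring

lemma two_mul_form_eq_sum {v : ℤ → ℂ} (hv : MemHMinusHalf v) (j : ℤ) {ξ : ℤ → ℂ}
    {s : Finset ℤ} (hξ : support ξ ⊆ s) (hs : ∀ k ∈ s, 0 < k) :
    2 * form j v ξ = ∑ k ∈ s, (ξ k * wirt (ψ2 j) v k + conj (ξ k) * wirtBar (ψ2 j) v k) := by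
  have hsum : ξ = ∑ k ∈ s, Pi.single k (ξ k) := by
    funext i
    rw [Finset.sum_apply, Finset.sum_pi_single]
    split_ifs with hi
    · rfl
    · exact notMem_support.1 fun h => hi (hξ h)
  calc 2 * form j v ξ = 2 * form j v (∑ k ∈ s, Pi.single k (ξ k)) := by rw [← hsum]
    _ = _ := by
      rw [form_sum_right hv fun k _ => memHMinusHalf_single k (ξ k), Finset.mul_sum]
      refine Finset.sum_congr rfl fun k hk => ?_
      obtain ⟨hwirt, hwirtBar⟩ := wirt_psi2_and_wirtBar_psi2 hv j (hs k hk)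
      rw [form_comm, form_single_left j (hs k hk), hwirt, hwirtBar]
      ring

lemma oneForm_eq_sum (u : ℤ → ℂ) {η : ℤ → ℂ} {s : Finset ℤ} (hη : support η ⊆ s)
    (hs : ∀ j ∈ s, 0 < j) : oneForm u η = (∑ j ∈ s, I * ψ2 j u * conj (η j)).re := by
  rw [oneForm, tsum_eq_sum fun j hj => by simp [notMem_support.1 fun h => hj (hη h)]]
  exact congrArg re (Finset.sum_congr rfl fun j hj => if_pos (hs j hj))

lemma deriv_oneForm {v : ℤ → ℂ} (hv : MemHMinusHalf v) {ξ η : ℤ → ℂ} {sξ sη : Finset ℤ}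
    (hξ : support ξ ⊆ sξ) (hsξ : ∀ k ∈ sξ, 0 < k) (hη : support η ⊆ sη)
    (hsη : ∀ j ∈ sη, 0 < j) :
    deriv (fun t : ℝ => oneForm (fun k => v k + (t : ℂ) * ξ k) η) 0 =
      (∑ j ∈ sη, ∑ k ∈ sξ,
        I * (ξ k * wirt (ψ2 j) v k + conj (ξ k) * wirtBar (ψ2 j) v k) * conj (η j)).re := by
  have hξ' : ∀ t : ℝ, MemHMinusHalf ((t : ℂ) • ξ) := fun t =>
    memHMinusHalf_of_finite ((sξ.finite_toSet.subset hξ).subset (support_const_smul_subset _ _))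
  have hline : ∀ t : ℝ, oneForm (v + (t : ℂ) • ξ) η =
      (∑ j ∈ sη, I * ψ2 j v * conj (η j)).re +
        t • (∑ j ∈ sη, I * (2 * form j v ξ) * conj (η j)).re +
        t ^ 2 • (∑ j ∈ sη, I * ψ2 j ξ * conj (η j)).re := by
    intro t
    have hsum : ∑ j ∈ sη, I * ψ2 j (v + (t : ℂ) • ξ) * conj (η j) =
        ∑ j ∈ sη, I * ψ2 j v * conj (η j) +
          (t : ℂ) * ∑ j ∈ sη, I * (2 * form j v ξ) * conj (η j) +
          ((t ^ 2 : ℝ) : ℂ) * ∑ j ∈ sη, I * ψ2 j ξ * conj (η j) := by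
      simp only [psi2_add hv (hξ' t), form_real_smul_right, psi2_real_smul, Finset.mul_sum,
        ← Finset.sum_add_distrib]
      refine Finset.sum_congr rfl fun j _ => ?_
      push_cast
      ring
    rw [oneForm_eq_sum _ hη hsη, hsum, add_re, add_re, re_ofReal_mul, re_ofReal_mul, smul_eq_mul,
      smul_eq_mul]
  rw [show (fun t : ℝ => oneForm (fun k => v k + (t : ℂ) * ξ k) η) = _ from funext hline,
    deriv_quadratic]
  refine congrArg re (Finset.sum_congr rfl fun j _ => ?_)
  rw [two_mul_form_eq_sum hv j hξ hsξ, Finset.mul_sum, Finset.sum_mul]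

end Psi2

open Psi2

/-- The quadratic map `ψ₂` satisfies the symmetry relations
`∂ψ₂^j/∂v̄_k = ∂ψ₂^k/∂v̄_j` and `∂ψ₂^j/∂v_k = −∂ψ̄₂^k/∂v̄_j` for all `j, k ≥ 1`;
consequently the 1-form `i ψ₂(v) dv` is closed, i.e. the quadratic correction to `ω₀` in
`(id + ψ₂)^* ω₀` vanishes. -/
theorem psi2_symmetry (m' : ℝ) (hm' : 1 / 2 ≤ m') (v : ℤ → ℂ) (hv : hn m' v < ∞) :
    (∀ j k : ℤ, 1 ≤ j → 1 ≤ k →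
      wirtBar (ψ2 j) v k = wirtBar (ψ2 k) v j ∧
      wirt (ψ2 j) v k = -wirtBar (fun w => conj (ψ2 k w)) v j) ∧
    -- closedness of the 1-form `i ψ₂(v) dv`
    ∀ ξ η : ℤ → ℂ, {k | ξ k ≠ 0}.Finite → {k | η k ≠ 0}.Finite →
      (∀ k, ξ k ≠ 0 → 1 ≤ k) → (∀ k, η k ≠ 0 → 1 ≤ k) →
      deriv (fun t : ℝ => oneForm (fun k => v k + (t : ℂ) * ξ k) η) 0 =
        deriv (fun t : ℝ => oneForm (fun k => v k + (t : ℂ) * η k) ξ) 0 := by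
  have hv' : MemHMinusHalf v := memHMinusHalf_of_hn (by linarith) hv
  refine ⟨fun j k hj hk => ⟨wirtBar_psi2_comm hv' hj hk, ?_⟩, fun ξ η hξ hη hξpos hηpos => ?_⟩
  · rw [wirtBar_conj]
    exact wirt_psi2_eq_neg_conj hv' hj hk
  have hsξ : ∀ k ∈ hξ.toFinset, 0 < k := fun k hk => hξpos k (hξ.mem_toFinset.1 hk)
  have hsη : ∀ j ∈ hη.toFinset, 0 < j := fun j hj => hηpos j (hη.mem_toFinset.1 hj)
  rw [deriv_oneForm hv' hξ.coe_toFinset.ge hsξ hη.coe_toFinset.ge hsη,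
    deriv_oneForm hv' hη.coe_toFinset.ge hsη hξ.coe_toFinset.ge hsξ, Finset.sum_comm]
  simp only [Complex.re_sum]
  refine Finset.sum_congr rfl fun k hk => Finset.sum_congr rfl fun j hj => re_I_mul_conj_symm
    (wirt_psi2_eq_neg_conj hv' (hsη j hj) (hsξ k hk)) (wirtBar_psi2_comm hv' (hsη j hj) (hsξ k hk))
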